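/- Let C : ℝ → Sym(V) be continuous and Löwner-nondecreasing on a finite-dimensional inner product space V, with each C(s) positive semidefinite, and let α : [0,T] → ℝ be C¹ with α̇ ≤ 0, and ε : [0,T] → V be C¹. Then ∫₀^T C(α(t))(ε(t), ε̇(t)) dt ≥ (1/2) C(α(T))(ε(T), ε(T)) - (1/2) C(α(0))(ε(0), ε(0)). -/

import Mathlib

/-!
`C` is only continuous in its parameter, so the energy `E t = ½ C(α t)(ε t, ε t)` need not be
differentiable; one compares right difference quotients instead. For `z > x` we have
`α z ≤ α x`, so Löwner monotonicity and symmetry give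
`E z - E x ≤ ½ C(α z)(ε z + ε x, ε z - ε x)`, and after division by `z - x` the right-hand side
tends to `C(α x)(ε x, ε̇ x)`. A comparison principle for functions whose upper right Dini
derivative is bounded by a continuous `g` then yields `E T - E 0 ≤ ∫₀ᵀ g`.
-/

open Set Filter Topology

theorem continuous_apply_apply_of_finiteDimensional {X 𝕜 E F G : Type*} [TopologicalSpace X]
    [NontriviallyNormedField 𝕜] [CompleteSpace 𝕜]
    [NormedAddCommGroup E] [NormedSpace 𝕜 E] [FiniteDimensional 𝕜 E]
    [NormedAddCommGroup F] [NormedSpace 𝕜 F] [FiniteDimensional 𝕜 F]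
    [NormedAddCommGroup G] [NormedSpace 𝕜 G]
    (C : X → E →ₗ[𝕜] F →ₗ[𝕜] G) (hC : ∀ x y, Continuous fun s => C s x y) :
    Continuous fun p : X × E × F => C p.1 p.2.1 p.2.2 := by
  let C' : X → E →L[𝕜] F →L[𝕜] G := fun s =>
    LinearMap.toContinuousLinearMap
      ((LinearMap.toContinuousLinearMap : (F →ₗ[𝕜] G) ≃ₗ[𝕜] _).toLinearMap ∘ₗ C s)
  have hC' : Continuous C' :=
    continuous_clm_apply.2 fun x => continuous_clm_apply.2 fun y => hC x y
  exact ((hC'.comp continuous_fst).clm_apply (continuous_fst.comp continuous_snd)).clm_apply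
    (continuous_snd.comp continuous_snd)

theorem LinearMap.apply_self_sub_apply_self {R M : Type*} [CommRing R] [AddCommGroup M]
    [Module R M] (B : M →ₗ[R] M →ₗ[R] R) (hB : ∀ x y, B x y = B y x) (u v : M) :
    B u u - B v v = B (u + v) (u - v) := by
  simp only [map_add, map_sub, LinearMap.add_apply, hB v u]
  ring

theorem sub_le_integral_of_eventually_slope_lt {f g : ℝ → ℝ} {a b : ℝ} (hab : a ≤ b)
    (hf : ContinuousOn f (Icc a b)) (hg : ContinuousOn g (Icc a b))
    (hslope : ∀ x ∈ Ico a b, ∀ r, g x < r → ∀ᶠ z in 𝓝[>] x, slope f x z < r) :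
    f b - f a ≤ ∫ t in a..b, g t := by
  set G : ℝ → ℝ := fun u => f a + ∫ t in a..u, g t
  have hG : ∀ x ∈ Icc a b, HasDerivWithinAt G (g x) (Icc a b) x := fun x hx => by
    have : Fact (x ∈ Icc a b) := ⟨hx⟩
    have hint : IntervalIntegrable g MeasureTheory.volume a x :=
      (hg.mono (Icc_subset_Icc_right hx.2)).intervalIntegrable_of_Icc hx.1
    exact (intervalIntegral.integral_hasDerivWithinAt_right hint
      (hg.stronglyMeasurableAtFilter_nhdsWithin measurableSet_Icc x) (hg x hx)).const_add _
  have key := image_le_of_liminf_slope_right_le_deriv_boundary hf (B := G) (by simp [G])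
    (fun x hx => (hG x hx).continuousWithinAt)
    (fun x hx => (hG x (Ico_subset_Icc_self hx)).mono_of_mem_nhdsWithin
      (mem_of_superset (Icc_mem_nhdsGE hx.2) (Icc_subset_Icc_left hx.1)))
    (fun x hx r hr => (hslope x hx r hr).frequently) (right_mem_Icc.2 hab)
  simp only [G] at key
  linarith

theorem eventually_slope_half_energy_lt {V : Type*} [NormedAddCommGroup V] [NormedSpace ℝ V]
    {C : ℝ → V →ₗ[ℝ] V →ₗ[ℝ] ℝ} (hC : Continuous fun p : ℝ × V × V => C p.1 p.2.1 p.2.2)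
    (hsymm : ∀ (s : ℝ) (x y : V), C s x y = C s y x)
    (hmono : ∀ a b : ℝ, a ≤ b → ∀ x : V, C a x x ≤ C b x x)
    {α : ℝ → ℝ} {ε : ℝ → V} {ε' : V} {x : ℝ} (hα : ContinuousWithinAt α (Ioi x) x)
    (hα_le : ∀ᶠ z in 𝓝[>] x, α z ≤ α x) (hε : HasDerivWithinAt ε ε' (Ioi x) x)
    {r : ℝ} (hr : C (α x) (ε x) ε' < r) :
    ∀ᶠ z in 𝓝[>] x, slope (fun t => 1 / 2 * C (α t) (ε t) (ε t)) x z < r := by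
  have hlim : Tendsto (fun z => 1 / 2 * C (α z) (ε z + ε x) (slope ε x z)) (𝓝[>] x)
      (𝓝 (C (α x) (ε x) ε')) := by
    have h := (hC.tendsto (α x, ε x + ε x, ε')).comp <| hα.prodMk_nhds <|
      (hε.continuousWithinAt.add tendsto_const_nhds).prodMk_nhds
        ((hasDerivWithinAt_iff_tendsto_slope' self_notMem_Ioi).1 hε)
    convert h.const_mul (1 / 2) using 2 <;>
      simp only [Function.comp_def, Pi.add_apply, map_add, LinearMap.add_apply]
    ring
  filter_upwards [hlim.eventually (gt_mem_nhds hr), hα_le, self_mem_nhdsWithin]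
    with z hz hαz hxz
  have hsplit := (C (α z)).apply_self_sub_apply_self (hsymm _) (ε z) (ε x)
  have hlowner := hmono _ _ hαz (ε x)
  calc slope (fun t => 1 / 2 * C (α t) (ε t) (ε t)) x z
      = (z - x)⁻¹ * (1 / 2 * (C (α z) (ε z) (ε z) - C (α x) (ε x) (ε x))) := by
        rw [slope_def_field]; ring
    _ ≤ (z - x)⁻¹ * (1 / 2 * C (α z) (ε z + ε x) (ε z - ε x)) := by
        have : 0 ≤ (z - x)⁻¹ := inv_nonneg.2 (sub_nonneg.2 (le_of_lt hxz))
        gcongr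
        linarith
    _ = 1 / 2 * C (α z) (ε z + ε x) (slope ε x z) := by
        rw [slope, vsub_eq_sub, map_smul, smul_eq_mul]; ring
    _ < r := hz

theorem stmt17_general {V : Type*} [NormedAddCommGroup V] [InnerProductSpace ℝ V]
    [FiniteDimensional ℝ V]
    (C : ℝ → V →ₗ[ℝ] V →ₗ[ℝ] ℝ)
    (hCcont : ∀ x y : V, Continuous fun s => C s x y)
    (hsymm : ∀ (s : ℝ) (x y : V), C s x y = C s y x)
    (hmono : ∀ a b : ℝ, a ≤ b → ∀ x : V, C a x x ≤ C b x x)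
    (T : ℝ) (hT : 0 < T) (α α' : ℝ → ℝ)
    (hα : ∀ t ∈ Set.Icc (0 : ℝ) T, HasDerivAt α (α' t) t)
    (hα' : ∀ t ∈ Set.Icc (0 : ℝ) T, α' t ≤ 0)
    (ε ε' : ℝ → V)
    (hε : ∀ t ∈ Set.Icc (0 : ℝ) T, HasDerivAt ε (ε' t) t)
    (hε'c : ContinuousOn ε' (Set.Icc (0 : ℝ) T)) :
    (1 / 2) * C (α T) (ε T) (ε T) - (1 / 2) * C (α 0) (ε 0) (ε 0)
      ≤ ∫ t in (0 : ℝ)..T, C (α t) (ε t) (ε' t) := by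
  have hC := continuous_apply_apply_of_finiteDimensional C hCcont
  have hαc : ContinuousOn α (Icc 0 T) := fun t ht => (hα t ht).continuousAt.continuousWithinAt
  have hεc : ContinuousOn ε (Icc 0 T) := fun t ht => (hε t ht).continuousAt.continuousWithinAt
  have hαanti : AntitoneOn α (Icc 0 T) :=
    antitoneOn_of_hasDerivWithinAt_nonpos (convex_Icc 0 T) hαc
      (fun t ht => (hα t (interior_subset ht)).hasDerivWithinAt)
      (fun t ht => hα' t (interior_subset ht))
  refine sub_le_integral_of_eventually_slope_lt hT.le
    (continuousOn_const.mul (hC.comp_continuousOn (hαc.prodMk (hεc.prodMk hεc))))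
    (hC.comp_continuousOn (hαc.prodMk (hεc.prodMk hε'c))) fun x hx r hr => ?_
  have hxI := Ico_subset_Icc_self hx
  refine eventually_slope_half_energy_lt hC hsymm hmono
    (hα x hxI).continuousAt.continuousWithinAt ?_ (hε x hxI).hasDerivWithinAt hr
  filter_upwards [Ioc_mem_nhdsGT hx.2] with z hz
  exact hαanti hxI ⟨hx.1.trans hz.1.le, hz.2⟩ hz.1.le

/-- Continuous-time energy inequality: for `C : ℝ → Sym(V)` continuous,
Löwner-nondecreasing and pointwise positive semidefinite, `α` C¹ with `α̇ ≤ 0`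
and `ε` C¹,
`∫₀ᵀ C(α(t))(ε(t), ε̇(t)) dt ≥ (1/2)C(α(T))(ε(T),ε(T)) - (1/2)C(α(0))(ε(0),ε(0))`. -/
theorem stmt17 {V : Type*} [NormedAddCommGroup V] [InnerProductSpace ℝ V]
    [FiniteDimensional ℝ V]
    (C : ℝ → V →ₗ[ℝ] V →ₗ[ℝ] ℝ)
    (hCcont : ∀ x y : V, Continuous fun s => C s x y)
    (hsymm : ∀ (s : ℝ) (x y : V), C s x y = C s y x)
    (hpsd : ∀ (s : ℝ) (x : V), 0 ≤ C s x x)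
    (hmono : ∀ a b : ℝ, a ≤ b → ∀ x : V, C a x x ≤ C b x x)
    (T : ℝ) (hT : 0 < T) (α α' : ℝ → ℝ)
    (hα : ∀ t ∈ Set.Icc (0 : ℝ) T, HasDerivAt α (α' t) t)
    (hα'c : ContinuousOn α' (Set.Icc (0 : ℝ) T))
    (hα' : ∀ t ∈ Set.Icc (0 : ℝ) T, α' t ≤ 0)
    (ε ε' : ℝ → V)
    (hε : ∀ t ∈ Set.Icc (0 : ℝ) T, HasDerivAt ε (ε' t) t)
    (hε'c : ContinuousOn ε' (Set.Icc (0 : ℝ) T)) :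
    (1 / 2) * C (α T) (ε T) (ε T) - (1 / 2) * C (α 0) (ε 0) (ε 0)
      ≤ ∫ t in (0 : ℝ)..T, C (α t) (ε t) (ε' t) :=
  stmt17_general C hCcont hsymm hmono T hT α α' hα hα' ε ε' hε hε'c
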